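/- Subformula property for the annotation-free bidirectional system restricted to base-type mode switches: for every typing context Γ, term e, and type B, if Γ ⊢ e ⇒ B is derivable, then B is a subformula of some type occurring in Γ. -/
import Mathlib


/-- Types: a single base type `b` and function types. -/
inductive Ty : Type
  | base : Ty
  | arr : Ty → Ty → Ty
deriving DecidableEq

/-- Annotation-free terms (de Bruijn indices): variables, λ-abstraction,
    and application. -/
inductive Tm : Type
  | var : Nat → Tm
  | lam : Tm → Tm
  | app : Tm → Tm → Tm
deriving DecidableEq

mutual
  /-- Synthesis judgment `Γ ⊢ e ⇒ A` of the annotation-free bidirectional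
      system restricted to base-type mode switches. -/
  inductive Syn : List Ty → Tm → Ty → Prop
    | var {Γ : List Ty} {n : Nat} {A : Ty} :
        Γ[n]? = some A → Syn Γ (.var n) A
    | app {Γ e₁ e₂ A B} :
        Syn Γ e₁ (.arr A B) → Chk Γ e₂ A → Syn Γ (.app e₁ e₂) B

  /-- Checking judgment `Γ ⊢ e ⇐ A`, with a mode switch permitted only when
      the synthesized type is the base type `b`. -/
  inductive Chk : List Ty → Tm → Ty → Prop
    | sub {Γ e B} :
        Syn Γ e .base → Ty.base = B → Chk Γ e B
    | lam {Γ e A₁ A₂} :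
        Chk (A₁ :: Γ) e A₂ → Chk Γ (.lam e) (.arr A₁ A₂)
end

/-- The subformula relation on types: the reflexive-transitive closure
    of "A₁ is a subformula of A₁ → A₂" and "A₂ is a subformula of A₁ → A₂". -/
inductive Subformula : Ty → Ty → Prop
  | refl (A : Ty) : Subformula A A
  | arrL {A B₁ B₂ : Ty} : Subformula A B₁ → Subformula A (.arr B₁ B₂)
  | arrR {A B₁ B₂ : Ty} : Subformula A B₂ → Subformula A (.arr B₁ B₂)


theorem Subformula.right {A B C : Ty} (h : Subformula (.arr A B) C) : Subformula B C := by
  induction h with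
  | refl => exact .arrR (.refl _)
  | arrL _ ih => exact .arrL ih
  | arrR _ ih => exact .arrR ih

/-- Subformula property: a synthesized type is a subformula of some type
    occurring in the context. -/
theorem subformula_property (Γ : List Ty) (e : Tm) (B : Ty)
    (h : Syn Γ e B) : ∃ A ∈ Γ, Subformula B A := by
  induction e generalizing Γ B with
  | var n => cases h with
    | var hn => exact ⟨B, List.mem_of_getElem? hn, .refl _⟩
  | lam => cases h
  | app e₁ e₂ ih₁ _ =>
    cases h with
    | app h₁ _ =>
      obtain ⟨A, hA, hsub⟩ := ih₁ _ _ h₁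
      exact ⟨A, hA, hsub.right⟩
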